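/- arXiv:1501.03298 — 3 statements merged into one kernel-verified Lean document; each statement's English description precedes it below -/
import Mathlib

section
/- For real antisymmetric 4×4 matrices identified with pairs (e⃗, m⃗) ∈ ℝ³ × ℝ³, the set Σ = {(e⃗, m⃗) : e⃗·m⃗ = ±1, ‖e⃗‖ = ‖m⃗‖} has exactly two connected components Σ₊ = {e⃗·m⃗ = 1, ‖e⃗‖=‖m⃗‖} and Σ₋ = {e⃗·m⃗ = −1, ‖e⃗‖=‖m⃗‖}, and each component is homeomorphic to the tangent bundle of the 2-sphere TS². -/
noncomputable section

open scoped InnerProductSpace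

abbrev E3 := EuclideanSpace ℝ (Fin 3)

/-- Σ = {(e⃗, m⃗) : e⃗·m⃗ = ±1, ‖e⃗‖ = ‖m⃗‖}. -/
def SigmaSet : Set (E3 × E3) :=
  {p | (⟪p.1, p.2⟫_ℝ = 1 ∨ ⟪p.1, p.2⟫_ℝ = -1) ∧ ‖p.1‖ = ‖p.2‖}

def SigmaPlus : Set (E3 × E3) := {p | ⟪p.1, p.2⟫_ℝ = 1 ∧ ‖p.1‖ = ‖p.2‖}

def SigmaMinus : Set (E3 × E3) := {p | ⟪p.1, p.2⟫_ℝ = -1 ∧ ‖p.1‖ = ‖p.2‖}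

/-- The tangent bundle of the unit 2-sphere, realized as pairs (x⃗, v⃗) with ‖x⃗‖ = 1 and
x⃗·v⃗ = 0. -/
def TS2 : Set (E3 × E3) := {p | ‖p.1‖ = 1 ∧ ⟪p.1, p.2⟫_ℝ = 0}

/-!
Put `a = e + m` and `b = e - m`. Then `⟪a, b⟫ = ‖e‖² - ‖m‖²` and `‖a‖² - ‖b‖² = 4⟪e, m⟫`, so for
`c > 0` the pairs with `⟪e, m⟫ = c`, `‖e‖ = ‖m‖` are exactly the `(a, b)` with `a ⊥ b` and
`‖a‖ = √(‖b‖² + 4c)`; normalizing `a` identifies them with the tangent bundle of the unit sphere.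
Flipping the sign of `m` exchanges the levels `c` and `-c`. The tangent bundle is connected, being
the image of `S² × ℝ³` under `(x, w) ↦ (x, w - ⟪x, w⟫ x)`, and `Σ₊`, `Σ₋` are disjoint closed sets
covering `Σ`, hence clopen in it.
-/

section

variable (E : Type*) [NormedAddCommGroup E] [InnerProductSpace ℝ E]

def sphereTangentBundle : Set (E × E) := {p | ‖p.1‖ = 1 ∧ ⟪p.1, p.2⟫_ℝ = 0}

def equalNormPairs (c : ℝ) : Set (E × E) := {p | ⟪p.1, p.2⟫_ℝ = c ∧ ‖p.1‖ = ‖p.2‖}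

variable {E}

lemma isConnected_sphereTangentBundle (h : 1 < Module.rank ℝ E) :
    IsConnected (sphereTangentBundle E) := by
  have hproj : (fun q : E × E ↦ (q.1, q.2 - ⟪q.1, q.2⟫_ℝ • q.1)) ''
      (Metric.sphere 0 1 ×ˢ Set.univ) = sphereTangentBundle E := by
    ext p
    constructor
    · rintro ⟨⟨x, w⟩, ⟨hx, -⟩, rfl⟩
      rw [mem_sphere_zero_iff_norm] at hx
      refine ⟨hx, ?_⟩
      simp only [inner_sub_right, real_inner_smul_right, real_inner_self_eq_norm_sq, hx]
      ring
    · rintro ⟨hx, hxv⟩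
      exact ⟨p, ⟨mem_sphere_zero_iff_norm.2 hx, trivial⟩, by simp [hxv]⟩
  rw [← hproj]
  exact ((isConnected_sphere h 0 zero_le_one).prod isConnected_univ).image _
    (by fun_prop)

lemma norm_add_sq_sub_norm_sub_sq (e m : E) :
    ‖e + m‖ ^ 2 - ‖e - m‖ ^ 2 = 4 * ⟪e, m⟫_ℝ := by
  rw [norm_add_sq_real, norm_sub_sq_real]; ring

lemma inner_add_sub_eq_norm_sq_sub (e m : E) :
    ⟪e + m, e - m⟫_ℝ = ‖e‖ ^ 2 - ‖m‖ ^ 2 := by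
  rw [inner_add_left, inner_sub_right, inner_sub_right, real_inner_self_eq_norm_sq,
    real_inner_self_eq_norm_sq, real_inner_comm e m]
  ring

namespace equalNormPairs

variable {c : ℝ}

lemma isClosed (c : ℝ) : IsClosed (equalNormPairs E c) :=
  (isClosed_eq (by fun_prop) continuous_const).inter (isClosed_eq (by fun_prop) (by fun_prop))

lemma disjoint {d : ℝ} (h : c ≠ d) : Disjoint (equalNormPairs E c) (equalNormPairs E d) :=
  Set.disjoint_left.2 fun _ hc hd ↦ h (hc.1.symm.trans hd.1)

lemma norm_add_sq {p : E × E} (hp : p ∈ equalNormPairs E c) :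
    ‖p.1 + p.2‖ ^ 2 = ‖p.1 - p.2‖ ^ 2 + 4 * c := by
  rw [← hp.1]; linarith [norm_add_sq_sub_norm_sub_sq p.1 p.2]

lemma norm_add_pos (hc : 0 < c) {p : E × E} (hp : p ∈ equalNormPairs E c) :
    0 < ‖p.1 + p.2‖ := by
  refine norm_pos_iff.2 fun h0 ↦ ?_
  have := norm_add_sq hp
  rw [h0, norm_zero] at this
  nlinarith [sq_nonneg ‖p.1 - p.2‖]

def toTangent (p : E × E) : E × E := (‖p.1 + p.2‖⁻¹ • (p.1 + p.2), p.1 - p.2)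

/-- The inverse of `toTangent`: `√(‖v‖² + 4c)` recovers `‖e + m‖` from `v = e - m`. -/
def ofTangent (c : ℝ) (q : E × E) : E × E :=
  ((2 : ℝ)⁻¹ • (√(‖q.2‖ ^ 2 + 4 * c) • q.1 + q.2), (2 : ℝ)⁻¹ • (√(‖q.2‖ ^ 2 + 4 * c) • q.1 - q.2))

lemma continuous_ofTangent (c : ℝ) : Continuous (ofTangent (E := E) c) := by
  unfold ofTangent; fun_prop

lemma toTangent_mem (hc : 0 < c) {p : E × E} (hp : p ∈ equalNormPairs E c) :
    toTangent p ∈ sphereTangentBundle E := by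
  refine ⟨?_, ?_⟩
  · simp only [toTangent, norm_smul, norm_inv, norm_norm, inv_mul_cancel₀ (norm_add_pos hc hp).ne']
  · simp only [toTangent, real_inner_smul_left, (real_inner_add_sub_eq_zero_iff _ _).2 hp.2,
      mul_zero]

lemma ofTangent_mem (hc : 0 < c) {q : E × E} (hq : q ∈ sphereTangentBundle E) :
    ofTangent c q ∈ equalNormPairs E c := by
  obtain ⟨hx, hxv⟩ := hq
  unfold ofTangent
  set r := √(‖q.2‖ ^ 2 + 4 * c)
  have hr : ‖r • q.1‖ ^ 2 = ‖q.2‖ ^ 2 + 4 * c := by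
    rw [norm_smul, hx, mul_one, Real.norm_eq_abs, sq_abs, Real.sq_sqrt (by positivity)]
  have hvr : ⟪q.2, r • q.1⟫_ℝ = 0 := by rw [real_inner_smul_right, real_inner_comm, hxv, mul_zero]
  refine ⟨?_, ?_⟩
  · simp only [real_inner_smul_left, real_inner_smul_right, inner_add_sub_eq_norm_sq_sub, hr]
    ring
  · simp only [norm_smul, norm_sub_eq_norm_add hvr]

lemma ofTangent_toTangent (hc : 0 < c) {p : E × E} (hp : p ∈ equalNormPairs E c) :
    ofTangent c (toTangent p) = p := by
  have hpos := norm_add_pos hc hp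
  have hr : √(‖p.1 - p.2‖ ^ 2 + 4 * c) = ‖p.1 + p.2‖ := by
    rw [← norm_add_sq hp, Real.sqrt_sq hpos.le]
  simp only [ofTangent, toTangent, hr, smul_smul, mul_inv_cancel₀ hpos.ne', one_smul]
  ext <;> simp only <;> module

lemma toTangent_ofTangent (hc : 0 < c) {q : E × E} (hq : q ∈ sphereTangentBundle E) :
    toTangent (ofTangent c q) = q := by
  have hr : 0 < √(‖q.2‖ ^ 2 + 4 * c) := Real.sqrt_pos.2 (by positivity)
  have hsum : (ofTangent c q).1 + (ofTangent c q).2 = √(‖q.2‖ ^ 2 + 4 * c) • q.1 := by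
    simp only [ofTangent]; module
  have hdiff : (ofTangent c q).1 - (ofTangent c q).2 = q.2 := by
    simp only [ofTangent]; module
  rw [toTangent, hsum, hdiff, norm_smul, hq.1, mul_one, Real.norm_of_nonneg hr.le, smul_smul,
    inv_mul_cancel₀ hr.ne', one_smul]

def homeomorphSphereTangentBundleOfPos (hc : 0 < c) :
    equalNormPairs E c ≃ₜ sphereTangentBundle E where
  toFun p := ⟨toTangent p, toTangent_mem hc p.2⟩
  invFun q := ⟨ofTangent c q, ofTangent_mem hc q.2⟩
  left_inv p := Subtype.ext (ofTangent_toTangent hc p.2)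
  right_inv q := Subtype.ext (toTangent_ofTangent hc q.2)
  continuous_toFun := by
    have := fun p : equalNormPairs E c ↦ (norm_add_pos hc p.2).ne'
    unfold toTangent
    fun_prop (disch := assumption)
  continuous_invFun := ((continuous_ofTangent c).comp continuous_subtype_val).subtype_mk _

def negSnd (c : ℝ) : equalNormPairs E c ≃ₜ equalNormPairs E (-c) :=
  ((Homeomorph.refl E).prodCongr (Homeomorph.neg E)).sets <| by
    ext p; simp [equalNormPairs, inner_neg_right, neg_eq_iff_eq_neg]

theorem nonempty_homeomorph_sphereTangentBundle (hc : c ≠ 0) :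
    Nonempty (equalNormPairs E c ≃ₜ sphereTangentBundle E) := by
  rcases hc.lt_or_gt with hc | hc
  · exact ⟨(negSnd c).trans (homeomorphSphereTangentBundleOfPos (neg_pos.2 hc))⟩
  · exact ⟨homeomorphSphereTangentBundleOfPos hc⟩

theorem isConnected (h : 1 < Module.rank ℝ E) (hc : c ≠ 0) :
    IsConnected (equalNormPairs E c) := by
  obtain ⟨φ⟩ := nonempty_homeomorph_sphereTangentBundle (E := E) hc
  have := isConnected_iff_connectedSpace.1 (isConnected_sphereTangentBundle h)
  exact isConnected_iff_connectedSpace.2 (φ.symm.surjective.connectedSpace φ.symm.continuous)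

end equalNormPairs

end

lemma isClopen_preimage_val_of_subset_union {X : Type*} [TopologicalSpace X] {u s t : Set X}
    (hs : IsClosed s) (ht : IsClosed t) (hu : u ⊆ s ∪ t) (hst : Disjoint s t) :
    IsClopen (Subtype.val ⁻¹' s : Set u) := by
  refine ⟨hs.preimage continuous_subtype_val, ?_⟩
  have : (Subtype.val ⁻¹' s : Set u)ᶜ = Subtype.val ⁻¹' t := by
    ext ⟨x, hx⟩
    simp only [Set.mem_compl_iff, Set.mem_preimage]
    exact ⟨(hu hx).resolve_left, fun ht ↦ Set.disjoint_right.1 hst ht⟩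
  rw [← isClosed_compl_iff, this]
  exact ht.preimage continuous_subtype_val

lemma one_lt_rank_E3 : 1 < Module.rank ℝ E3 := by
  rw [← Module.finrank_eq_rank, finrank_euclideanSpace_fin]
  norm_num

/-- Σ has exactly two connected components Σ₊ and Σ₋ (they are disjoint, connected, their
union is Σ, and each is clopen in Σ), and each component is homeomorphic to TS². -/
theorem stmt1 :
    SigmaSet = SigmaPlus ∪ SigmaMinus ∧
    Disjoint SigmaPlus SigmaMinus ∧
    IsConnected SigmaPlus ∧ IsConnected SigmaMinus ∧
    IsClopen (Subtype.val ⁻¹' SigmaPlus : Set SigmaSet) ∧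
    IsClopen (Subtype.val ⁻¹' SigmaMinus : Set SigmaSet) ∧
    Nonempty (SigmaPlus ≃ₜ TS2) ∧ Nonempty (SigmaMinus ≃ₜ TS2) := by
  have hunion : SigmaSet = SigmaPlus ∪ SigmaMinus := Set.ext fun _ ↦ or_and_right
  have hdisj : Disjoint SigmaPlus SigmaMinus := equalNormPairs.disjoint (by norm_num)
  have hP : IsClosed SigmaPlus := equalNormPairs.isClosed (E := E3) 1
  have hM : IsClosed SigmaMinus := equalNormPairs.isClosed (E := E3) (-1)
  exact ⟨hunion, hdisj, equalNormPairs.isConnected one_lt_rank_E3 one_ne_zero,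
    equalNormPairs.isConnected one_lt_rank_E3 (by norm_num),
    isClopen_preimage_val_of_subset_union hP hM hunion.subset hdisj,
    isClopen_preimage_val_of_subset_union hM hP (hunion.trans (Set.union_comm _ _)).subset
      hdisj.symm,
    equalNormPairs.nonempty_homeomorph_sphereTangentBundle one_ne_zero,
    equalNormPairs.nonempty_homeomorph_sphereTangentBundle (by norm_num)⟩
end
end

section
/- Let q⁰, q¹, q², q³ be self-adjoint operators satisfying [q^μ, q^ν] = i σ^{μν} with σ having magnetic part m⃗ with ‖m⃗‖ ≥ 1. Then for any unit state vector ψ in the common domain, ∑_{1≤j<k≤3} Δ(q^j)Δ(q^k) ≥ 1/2. -/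
/-!
By Robertson's inequality each product Δ(q^j)Δ(q^k) is at least |σ^{jk}|/2: the expectation of
the commutator [A, B] in ψ is 2i times the imaginary part of the inner product of the centred
vectors (A - ⟨A⟩)ψ and (B - ⟨B⟩)ψ (centring does not change the commutator), so Cauchy–Schwarz
bounds it by 2Δ(A)Δ(B). Summing over the three pairs and using ‖m⃗‖₂ ≤ ‖m⃗‖₁ gives the claim.
-/

noncomputable section

open scoped InnerProductSpace
open Finset Matrix

/-- Uncertainty Δ(A) of the observable A in the vector state ψ. -/
def uncertainty {H : Type*} [NormedAddCommGroup H] [InnerProductSpace ℂ H]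
    (A : H →ₗ[ℂ] H) (ψ : H) : ℝ :=
  Real.sqrt ((⟪ψ, A (A ψ)⟫_ℂ).re - ((⟪ψ, A ψ⟫_ℂ).re) ^ 2)

namespace LinearMap

variable {H : Type*} [NormedAddCommGroup H] [InnerProductSpace ℂ H]

lemma IsSymmetric.uncertainty_eq_norm_sub {A : H →ₗ[ℂ] H} (hA : A.IsSymmetric) {ψ : H}
    (hψ : ‖ψ‖ = 1) :
    uncertainty A ψ = ‖(A - ((⟪ψ, A ψ⟫_ℂ).re : ℂ) • 1) ψ‖ := by
  set a := (⟪ψ, A ψ⟫_ℂ).re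
  have hsq : ‖(A - (a : ℂ) • 1) ψ‖ ^ 2 = (⟪ψ, A (A ψ)⟫_ℂ).re - a ^ 2 := by
    rw [sub_apply, smul_apply, Module.End.one_apply, norm_sub_sq (𝕜 := ℂ), inner_smul_right,
      norm_smul, hψ, Complex.norm_real, Real.norm_eq_abs, @norm_sq_eq_re_inner ℂ, hA, hA ψ ψ,
      RCLike.re_to_complex, RCLike.re_to_complex, Complex.re_ofReal_mul, mul_one, sq_abs]
    ring
  rw [uncertainty, ← hsq, Real.sqrt_sq (norm_nonneg _)]

lemma IsSymmetric.inner_commutator_eq {A B : H →ₗ[ℂ] H} (hA : A.IsSymmetric)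
    (hB : B.IsSymmetric) (ψ : H) :
    ⟪ψ, A (B ψ) - B (A ψ)⟫_ℂ = 2 * (⟪A ψ, B ψ⟫_ℂ).im * Complex.I := by
  rw [inner_sub_right, ← hA ψ (B ψ), ← hB ψ (A ψ), ← inner_conj_symm (B ψ) (A ψ),
    Complex.sub_conj]
  push_cast
  ring

lemma IsSymmetric.norm_inner_commutator_le {A B : H →ₗ[ℂ] H} (hA : A.IsSymmetric)
    (hB : B.IsSymmetric) (ψ : H) :
    ‖⟪ψ, A (B ψ) - B (A ψ)⟫_ℂ‖ ≤ 2 * (‖A ψ‖ * ‖B ψ‖) := by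
  rw [hA.inner_commutator_eq hB, norm_mul, Complex.norm_I, mul_one, norm_mul, Complex.norm_two,
    Complex.norm_real, Real.norm_eq_abs]
  gcongr
  exact (Complex.abs_im_le_norm _).trans (norm_inner_le_norm _ _)

lemma commutator_sub_smul_one (A B : H →ₗ[ℂ] H) (a b : ℂ) (x : H) :
    (A - a • 1) ((B - b • 1) x) - (B - b • 1) ((A - a • 1) x) = A (B x) - B (A x) := by
  simp only [sub_apply, smul_apply, Module.End.one_apply, map_sub, map_smul]
  module

/-- Robertson's uncertainty relation. -/
theorem IsSymmetric.norm_inner_commutator_le_uncertainty_mul {A B : H →ₗ[ℂ] H}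
    (hA : A.IsSymmetric) (hB : B.IsSymmetric) {ψ : H} (hψ : ‖ψ‖ = 1) :
    ‖⟪ψ, A (B ψ) - B (A ψ)⟫_ℂ‖ ≤ 2 * (uncertainty A ψ * uncertainty B ψ) := by
  have hA' := hA.sub ((IsSymmetric.one).smul (Complex.conj_ofReal (⟪ψ, A ψ⟫_ℂ).re))
  have hB' := hB.sub ((IsSymmetric.one).smul (Complex.conj_ofReal (⟪ψ, B ψ⟫_ℂ).re))
  rw [hA.uncertainty_eq_norm_sub hψ, hB.uncertainty_eq_norm_sub hψ,
    ← commutator_sub_smul_one A B _ _ ψ]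
  exact hA'.norm_inner_commutator_le hB' ψ

theorem IsSymmetric.abs_le_two_mul_uncertainty_mul_of_commutator_eq {A B : H →ₗ[ℂ] H}
    (hA : A.IsSymmetric) (hB : B.IsSymmetric) {ψ : H} (hψ : ‖ψ‖ = 1) {c : ℝ}
    (hc : A (B ψ) - B (A ψ) = (c : ℂ) • Complex.I • ψ) :
    |c| ≤ 2 * (uncertainty A ψ * uncertainty B ψ) := by
  have h := hA.norm_inner_commutator_le_uncertainty_mul hB hψ
  rwa [hc, inner_smul_right, inner_smul_right, inner_self_eq_norm_sq_to_K, hψ, norm_mul, norm_mul,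
    Complex.norm_I, Complex.norm_real, Real.norm_eq_abs, RCLike.ofReal_one, one_pow, norm_one,
    one_mul, mul_one] at h

end LinearMap

lemma sqrt_sq_add_sq_add_sq_le (x y z : ℝ) :
    Real.sqrt (x ^ 2 + y ^ 2 + z ^ 2) ≤ |x| + |y| + |z| := by
  rw [Real.sqrt_le_iff]
  refine ⟨by positivity, ?_⟩
  nlinarith [abs_nonneg x, abs_nonneg y, abs_nonneg z, sq_abs x, sq_abs y, sq_abs z]

theorem stmt3_general {H : Type*} [NormedAddCommGroup H] [InnerProductSpace ℂ H]
    (σ : Matrix (Fin 4) (Fin 4) ℝ)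
    (q : Fin 4 → H →ₗ[ℂ] H)
    (hsym : ∀ (μ : Fin 4) (x y : H), ⟪q μ x, y⟫_ℂ = ⟪x, q μ y⟫_ℂ)
    (hccr : ∀ (μ ν : Fin 4) (x : H), q μ (q ν x) - q ν (q μ x) = (σ μ ν : ℂ) • Complex.I • x)
    (hm : 1 ≤ Real.sqrt (σ 2 3 ^ 2 + σ 3 1 ^ 2 + σ 1 2 ^ 2))
    (ψ : H) (hψ : ‖ψ‖ = 1) :
    1 / 2 ≤ uncertainty (q 1) ψ * uncertainty (q 2) ψ +
      uncertainty (q 1) ψ * uncertainty (q 3) ψ +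
      uncertainty (q 2) ψ * uncertainty (q 3) ψ := by
  have robertson (j k : Fin 4) : |σ j k| ≤ 2 * (uncertainty (q j) ψ * uncertainty (q k) ψ) :=
    LinearMap.IsSymmetric.abs_le_two_mul_uncertainty_mul_of_commutator_eq (hsym j) (hsym k) hψ
      (hccr j k ψ)
  have h23 := robertson 2 3
  have h31 := robertson 3 1
  have h12 := robertson 1 2
  have hm₁ := hm.trans (sqrt_sq_add_sq_add_sq_le _ _ _)
  linarith

/-- If the self-adjoint coordinates satisfy [q^μ, q^ν] = iσ^{μν} with magnetic part m⃗ of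
norm ≥ 1, then ∑_{1≤j<k≤3} Δ(q^j)Δ(q^k) ≥ 1/2 in every unit vector state. -/
theorem stmt3 {H : Type*} [NormedAddCommGroup H] [InnerProductSpace ℂ H]
    (σ : Matrix (Fin 4) (Fin 4) ℝ) (hanti : σᵀ = -σ)
    (q : Fin 4 → H →ₗ[ℂ] H)
    (hsym : ∀ (μ : Fin 4) (x y : H), ⟪q μ x, y⟫_ℂ = ⟪x, q μ y⟫_ℂ)
    (hccr : ∀ (μ ν : Fin 4) (x : H), q μ (q ν x) - q ν (q μ x) = (σ μ ν : ℂ) • Complex.I • x)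
    (hm : 1 ≤ Real.sqrt (σ 2 3 ^ 2 + σ 3 1 ^ 2 + σ 1 2 ^ 2))
    (ψ : H) (hψ : ‖ψ‖ = 1) :
    1 / 2 ≤ uncertainty (q 1) ψ * uncertainty (q 2) ψ +
      uncertainty (q 1) ψ * uncertainty (q 3) ψ +
      uncertainty (q 2) ψ * uncertainty (q 3) ψ :=
  stmt3_general σ q hsym hccr hm ψ hψ
end
end

section
/- Let q⁰,…,q³ be self-adjoint operators with [q^μ, q^ν] = iσ^{μν} where σ ∈ Σ has electric and magnetic parts (e⃗, m⃗). Then for any unit state ψ in the domain with vanishing expectations ⟨q^μ⟩ = 0, one has ∑_{μ=0}^{3} Δ(q^μ)² ≥ √(2 + ‖e⃗‖² + ‖m⃗‖²), and in particular ∑_μ Δ(q^μ)² ≥ 2, since ‖e⃗‖, ‖m⃗‖ ≥ 1 on Σ. -/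
noncomputable section

open scoped InnerProductSpace
open Finset Matrix

/-- Electric part: e_j = σ^{0j}. -/
def elecPart (σ : Matrix (Fin 4) (Fin 4) ℝ) : Fin 3 → ℝ := fun j => σ 0 j.succ

/-- Magnetic part: m = (σ^{23}, σ^{31}, σ^{12}). -/
def magnPart (σ : Matrix (Fin 4) (Fin 4) ℝ) : Fin 3 → ℝ := ![σ 2 3, σ 3 1, σ 1 2]


/-!
Let `M` be the Gram matrix of the vectors `q^μ ψ`. It is positive semidefinite, its trace is
`∑ Δ(q^μ)²` because the expectations vanish, and the commutation relations give `M - Mᵀ = iσ`.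
For `σ ∈ Σ` one has `σ⁴ + s σ² + 1 = 0` with `s = ‖e‖² + ‖m‖²` (the constant term is the squared
Pfaffian `(e·m)²`), so `τ = (s + 1) σ + σ³` is antisymmetric with `τ² = -(s + 2)`: with
`c = √(s + 2)`, `iτ / c` is the sign of the Hermitian matrix `iσ`. Hence `c - iτ` is positive
semidefinite, being `2c` times a projection, and pairing it with `M` gives
`0 ≤ c tr M - tr (iσ iτ) / 2 = c tr M - c²`. Finally `‖e‖ = ‖m‖` and `|e·m| = 1` force
`‖e‖² ≥ 1` by Cauchy–Schwarz, so `c ≥ 2`.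
-/

lemma Matrix.eq_of_transpose_eq_neg_fin_four {G : Type*} [AddCommGroup G] [IsAddTorsionFree G]
    {σ : Matrix (Fin 4) (Fin 4) G} (hσ : σᵀ = -σ) :
    σ = !![0, σ 0 1, σ 0 2, σ 0 3; -σ 0 1, 0, σ 1 2, σ 1 3;
      -σ 0 2, -σ 1 2, 0, σ 2 3; -σ 0 3, -σ 1 3, -σ 2 3, 0] := by
  have h i j : σ j i = -σ i j := congrFun (congrFun hσ i) j
  have hd i : σ i i = 0 := self_eq_neg.mp (h i i)
  ext i j
  fin_cases i <;> fin_cases j <;> simp [hd, h 0 1, h 0 2, h 0 3, h 1 2, h 1 3, h 2 3]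

set_option maxHeartbeats 400000 in
lemma pow_four_add_smul_sq_of_transpose_eq_neg {σ : Matrix (Fin 4) (Fin 4) ℝ} (hσ : σᵀ = -σ) :
    σ ^ 4 + (∑ j, elecPart σ j ^ 2 + ∑ j, magnPart σ j ^ 2) • σ ^ 2
      + (∑ j, elecPart σ j * magnPart σ j) ^ 2 • 1 = 0 := by
  rw [Matrix.eq_of_transpose_eq_neg_fin_four hσ]
  simp only [elecPart, magnPart, Fin.sum_univ_three, pow_succ, pow_zero, one_mul]
  ext i j
  fin_cases i <;> fin_cases j <;> simp <;> ring

lemma trace_sq_of_transpose_eq_neg {σ : Matrix (Fin 4) (Fin 4) ℝ} (hσ : σᵀ = -σ) :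
    (σ ^ 2).trace = -2 * (∑ j, elecPart σ j ^ 2 + ∑ j, magnPart σ j ^ 2) := by
  rw [Matrix.eq_of_transpose_eq_neg_fin_four hσ]
  simp [elecPart, magnPart, Fin.sum_univ_three, Matrix.trace, sq, Fin.sum_univ_four]
  ring

lemma two_le_sum_sq_add_sum_sq {ι : Type*} [Fintype ι] {e m : ι → ℝ}
    (hdot : (∑ i, e i * m i) ^ 2 = 1) (hnorm : ∑ i, e i ^ 2 = ∑ i, m i ^ 2) :
    2 ≤ ∑ i, e i ^ 2 + ∑ i, m i ^ 2 := by
  have hcs := Finset.sum_mul_sq_le_sq_mul_sq Finset.univ e m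
  rw [hdot, ← hnorm] at hcs
  nlinarith [Finset.sum_nonneg fun i (_ : i ∈ Finset.univ) => sq_nonneg (e i)]

section OddPolynomial

variable {A : Type*} [Ring A] [Algebra ℝ A] {x : A} {s : ℝ}

lemma mul_smul_add_pow_three (hx : x ^ 4 + s • x ^ 2 + 1 = 0) :
    x * ((s + 1) • x + x ^ 3) = x ^ 2 - 1 := by
  rw [mul_add, mul_smul_comm, ← sq, ← pow_succ']
  linear_combination (norm := module) hx

lemma sq_smul_add_pow_three (hx : x ^ 4 + s • x ^ 2 + 1 = 0) :
    ((s + 1) • x + x ^ 3) ^ 2 = -(s + 2) • 1 := by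
  have hx6 : x ^ 6 + s • x ^ 4 + x ^ 2 = 0 := by
    have := congrArg (HMul.hMul (x ^ 2)) hx
    rwa [mul_add, mul_add, mul_smul_comm, ← pow_add, ← pow_add, mul_one, mul_zero] at this
  have hexp : ((s + 1) • x + x ^ 3) ^ 2 = (s + 1) ^ 2 • x ^ 2 + (2 * (s + 1)) • x ^ 4 + x ^ 6 := by
    rw [sq, add_mul, mul_add, mul_add, smul_mul_smul_comm, mul_smul_comm, smul_mul_assoc,
      ← sq x, ← pow_succ', ← pow_succ, ← pow_add]
    module
  rw [hexp]
  linear_combination (norm := module) hx6 + (s + 2) • hx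

end OddPolynomial

lemma exists_transpose_eq_neg_mul_self_eq_neg_smul_one {σ : Matrix (Fin 4) (Fin 4) ℝ}
    (hσ : σᵀ = -σ) (hdot_sq : (∑ j, elecPart σ j * magnPart σ j) ^ 2 = 1) :
    ∃ τ : Matrix (Fin 4) (Fin 4) ℝ, τᵀ = -τ ∧
      τ * τ = -(2 + ∑ j, elecPart σ j ^ 2 + ∑ j, magnPart σ j ^ 2) • 1 ∧
      -(σ * τ).trace = 2 * (2 + ∑ j, elecPart σ j ^ 2 + ∑ j, magnPart σ j ^ 2) := by
  set s := ∑ j, elecPart σ j ^ 2 + ∑ j, magnPart σ j ^ 2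
  have hσ4 : σ ^ 4 + s • σ ^ 2 + 1 = 0 := by
    simpa [hdot_sq] using pow_four_add_smul_sq_of_transpose_eq_neg hσ
  refine ⟨(s + 1) • σ + σ ^ 3, ?_, ?_, ?_⟩
  · simp only [transpose_add, transpose_smul, transpose_pow, hσ, smul_neg,
      Odd.neg_pow (by decide : Odd 3)]
    abel
  · rw [← sq, sq_smul_add_pow_three hσ4]
    congr 2
    ring
  · rw [mul_smul_add_pow_three hσ4, trace_sub, trace_sq_of_transpose_eq_neg hσ, trace_one,
      Fintype.card_fin]
    push_cast
    ring

section ComplexMatrix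

open scoped ComplexOrder

variable {n : Type*}

lemma Matrix.PosSemidef.re_trace_mul_nonneg [Fintype n] {M W : Matrix n n ℂ} (hM : M.PosSemidef)
    (hW : Wᴴ = W) {t : ℝ} (ht : 0 < t) (hWW : W * W = (t : ℂ) • W) :
    0 ≤ (M * W).trace.re := by
  have hconj : (t : ℂ) * (M * W).trace = (Wᴴ * M * W).trace := by
    rw [hW, ← smul_eq_mul, ← trace_smul, ← Matrix.mul_smul, ← hWW, ← mul_assoc, trace_mul_comm,
      mul_assoc]
  have hpos : 0 ≤ t * (M * W).trace.re := by
    have := (Complex.le_def.1 (hM.conjTranspose_mul_mul_same W).trace_nonneg).1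
    rwa [← hconj, Complex.re_ofReal_mul, Complex.zero_re] at this
  exact nonneg_of_mul_nonneg_right hpos ht

lemma Matrix.trace_transpose_mul_of_transpose_eq_neg [Fintype n] {R : Type*} [CommRing R]
    {M V : Matrix n n R} (hV : Vᵀ = -V) : (Mᵀ * V).trace = -(M * V).trace := by
  rw [← trace_transpose, transpose_mul, transpose_transpose, hV, neg_mul, trace_neg,
    trace_mul_comm]

lemma Matrix.PosSemidef.re_trace_mul_le [Fintype n] [DecidableEq n] {M S V : Matrix n n ℂ}
    (hM : M.PosSemidef) (hS : M - Mᵀ = S) (hVH : Vᴴ = V) (hVT : Vᵀ = -V) {c : ℝ} (hc : 0 < c)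
    (hVV : V * V = ((c : ℂ) ^ 2) • 1) :
    (S * V).trace.re ≤ 2 * c * M.trace.re := by
  set W := (c : ℂ) • 1 - V
  have hWH : Wᴴ = W := by
    simp [W, conjTranspose_sub, conjTranspose_smul, hVH]
  have hWW : W * W = ((2 * c : ℝ) : ℂ) • W := by
    simp only [W, sub_mul, mul_sub, one_mul, mul_one, smul_mul_assoc, mul_smul_comm, hVV]
    push_cast
    module
  have hMV : (S * V).trace = 2 * (M * V).trace := by
    rw [← hS, sub_mul, trace_sub, trace_transpose_mul_of_transpose_eq_neg hVT]
    ring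
  have hMW : (M * W).trace = c * M.trace - (M * V).trace := by
    simp [W, mul_sub, trace_sub, trace_smul]
  have h0 := hM.re_trace_mul_nonneg hWH (by positivity) hWW
  rw [hMW, Complex.sub_re, Complex.re_ofReal_mul, sub_nonneg] at h0
  rw [hMV, ← Complex.ofReal_ofNat, Complex.re_ofReal_mul]
  linarith

lemma Matrix.I_smul_map_ofReal_mul [Fintype n] (A B : Matrix n n ℝ) :
    (Complex.I • A.map (↑)) * (Complex.I • B.map (↑)) = -(A * B).map ((↑) : ℝ → ℂ) := by
  rw [smul_mul_smul_comm, Complex.I_mul_I, neg_one_smul]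
  exact congrArg Neg.neg (Matrix.map_mul (f := Complex.ofRealHom)).symm

lemma Matrix.conjTranspose_I_smul_map_ofReal {A : Matrix n n ℝ} (hA : Aᵀ = -A) :
    (Complex.I • A.map ((↑) : ℝ → ℂ))ᴴ = Complex.I • A.map (↑) := by
  ext i j
  have := congrFun (congrFun hA i) j
  simp_all [Complex.conj_ofReal]

lemma Matrix.transpose_I_smul_map_ofReal {A : Matrix n n ℝ} (hA : Aᵀ = -A) :
    (Complex.I • A.map ((↑) : ℝ → ℂ))ᵀ = -(Complex.I • A.map (↑)) := by
  rw [transpose_smul, ← transpose_map, hA]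
  ext i j
  simp

lemma Matrix.PosSemidef.neg_trace_mul_le [Fintype n] [DecidableEq n] {M : Matrix n n ℂ}
    {σ τ : Matrix n n ℝ} (hM : M.PosSemidef) (hS : M - Mᵀ = Complex.I • σ.map (↑))
    (hτ : τᵀ = -τ) {c : ℝ} (hc : 0 < c) (hττ : τ * τ = -c ^ 2 • 1) :
    -(σ * τ).trace ≤ 2 * c * M.trace.re := by
  have hVV : (Complex.I • τ.map ((↑) : ℝ → ℂ)) * (Complex.I • τ.map (↑)) = ((c : ℂ) ^ 2) • 1 := by
    rw [I_smul_map_ofReal_mul, hττ]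
    ext i j
    by_cases hij : i = j <;> simp [hij]
  have := hM.re_trace_mul_le hS (conjTranspose_I_smul_map_ofReal hτ)
    (transpose_I_smul_map_ofReal hτ) hc hVV
  have htr : ((σ * τ).map ((↑) : ℝ → ℂ)).trace = (σ * τ).trace :=
    (AddMonoidHom.map_trace Complex.ofRealHom _).symm
  rwa [I_smul_map_ofReal_mul, trace_neg, htr, Complex.neg_re, Complex.ofReal_re] at this

end ComplexMatrix

section Observables

variable {H : Type*} [NormedAddCommGroup H] [InnerProductSpace ℂ H]

lemma uncertainty_sq_of_inner_eq_zero {A : H →ₗ[ℂ] H} {ψ : H}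
    (hA : ∀ x y, ⟪A x, y⟫_ℂ = ⟪x, A y⟫_ℂ) (h0 : ⟪ψ, A ψ⟫_ℂ = 0) :
    uncertainty A ψ ^ 2 = ‖A ψ‖ ^ 2 := by
  have hnorm : (⟪A ψ, A ψ⟫_ℂ).re = ‖A ψ‖ ^ 2 := inner_self_eq_norm_sq (𝕜 := ℂ) (A ψ)
  rw [uncertainty, h0, ← hA, hnorm, Complex.zero_re, zero_pow two_ne_zero, sub_zero,
    Real.sq_sqrt (by positivity)]

lemma re_trace_gram {ι : Type*} [Fintype ι] (v : ι → H) :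
    (gram ℂ v).trace.re = ∑ i, ‖v i‖ ^ 2 := by
  simp only [trace, diag_apply, gram_apply, Complex.re_sum]
  exact Finset.sum_congr rfl fun i _ ↦ inner_self_eq_norm_sq (𝕜 := ℂ) (v i)

lemma gram_sub_transpose_of_commutator {ι : Type*} {q : ι → H →ₗ[ℂ] H} {σ : Matrix ι ι ℝ}
    (hsym : ∀ μ x y, ⟪q μ x, y⟫_ℂ = ⟪x, q μ y⟫_ℂ)
    (hccr : ∀ μ ν x, q μ (q ν x) - q ν (q μ x) = (σ μ ν : ℂ) • Complex.I • x)
    {ψ : H} (hψ : ‖ψ‖ = 1) :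
    gram ℂ (fun μ ↦ q μ ψ) - (gram ℂ fun μ ↦ q μ ψ)ᵀ = Complex.I • σ.map (↑) := by
  ext μ ν
  rw [Matrix.sub_apply, transpose_apply, gram_apply, gram_apply, hsym, hsym, ← inner_sub_right,
    hccr, inner_smul_right, inner_smul_right, inner_self_eq_norm_sq_to_K, hψ]
  simp [mul_comm]

end Observables

/-- For [q^μ, q^ν] = iσ^{μν} with σ ∈ Σ (i.e. e⃗·m⃗ = ±1 and ‖e⃗‖ = ‖m⃗‖), every unit
state with vanishing expectations obeys ∑_μ Δ(q^μ)² ≥ √(2 + ‖e⃗‖² + ‖m⃗‖²) ≥ 2. -/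
theorem stmt6 {H : Type*} [NormedAddCommGroup H] [InnerProductSpace ℂ H]
    (σ : Matrix (Fin 4) (Fin 4) ℝ) (hanti : σᵀ = -σ)
    (hdot : (∑ j, elecPart σ j * magnPart σ j) = 1 ∨ (∑ j, elecPart σ j * magnPart σ j) = -1)
    (hnorm : Real.sqrt (∑ j, elecPart σ j ^ 2) = Real.sqrt (∑ j, magnPart σ j ^ 2))
    (q : Fin 4 → H →ₗ[ℂ] H)
    (hsym : ∀ (μ : Fin 4) (x y : H), ⟪q μ x, y⟫_ℂ = ⟪x, q μ y⟫_ℂ)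
    (hccr : ∀ (μ ν : Fin 4) (x : H), q μ (q ν x) - q ν (q μ x) = (σ μ ν : ℂ) • Complex.I • x)
    (ψ : H) (hψ : ‖ψ‖ = 1) (hexp : ∀ μ, ⟪ψ, q μ ψ⟫_ℂ = 0) :
    Real.sqrt (2 + (∑ j, elecPart σ j ^ 2) + (∑ j, magnPart σ j ^ 2)) ≤
        ∑ μ, uncertainty (q μ) ψ ^ 2 ∧
      2 ≤ ∑ μ, uncertainty (q μ) ψ ^ 2 := by
  have hdot_sq : (∑ j, elecPart σ j * magnPart σ j) ^ 2 = 1 := by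
    rcases hdot with h | h <;> simp [h]
  have hs : 2 ≤ ∑ j, elecPart σ j ^ 2 + ∑ j, magnPart σ j ^ 2 := two_le_sum_sq_add_sum_sq hdot_sq
    ((Real.sqrt_inj (by positivity) (by positivity)).mp hnorm)
  set c := Real.sqrt (2 + ∑ j, elecPart σ j ^ 2 + ∑ j, magnPart σ j ^ 2)
  have hc2 : c ^ 2 = 2 + ∑ j, elecPart σ j ^ 2 + ∑ j, magnPart σ j ^ 2 :=
    Real.sq_sqrt (by positivity)
  have hc : 2 ≤ c := Real.le_sqrt_of_sq_le (by linarith)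
  obtain ⟨τ, hτ, hττ, htr⟩ := exists_transpose_eq_neg_mul_self_eq_neg_smul_one hanti hdot_sq
  rw [← hc2] at hττ htr
  have hgram := (posSemidef_gram ℂ fun μ ↦ q μ ψ).neg_trace_mul_le
    (gram_sub_transpose_of_commutator hsym hccr hψ) hτ (by linarith) hττ
  rw [htr, re_trace_gram] at hgram
  have hsum : ∑ μ, uncertainty (q μ) ψ ^ 2 = ∑ μ, ‖q μ ψ‖ ^ 2 :=
    Finset.sum_congr rfl fun μ _ ↦ uncertainty_sq_of_inner_eq_zero (hsym μ) (hexp μ)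
  have hbound : c ≤ ∑ μ, ‖q μ ψ‖ ^ 2 := by nlinarith
  rw [hsum]
  exact ⟨hbound, hc.trans hbound⟩
end
end
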